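/- arXiv:1202.2209 — 3 statements merged into one kernel-verified Lean document; each statement's English description precedes it below -/
import Mathlib

section
/- Let S be a social network with no source nodes, t a product, and C_t a self-sustaining SCS for t. Define R as the least set containing C_t and closed under adding any node j with t ∈ P(j) whose accumulated incoming weight from R is at least θ(j,t). Then the joint strategy assigning t to all nodes in R and t_0 to all other nodes is a (non-trivial) Nash equilibrium of the associated game. -/
open Finset

/-- A social network: a finite weighted directed graph together with product
assignments and thresholds.  `nbr i` is the set `N(i)` of in-neighbours of `i`. -/
structure SN (V P : Type) [Fintype V] [DecidableEq V] [DecidableEq P] where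
  nbr : V → Finset V
  w : V → V → ℝ
  prod : V → Finset P
  θ : V → P → ℝ
  no_self : ∀ i, i ∉ nbr i
  w_nonneg : ∀ i j, 0 ≤ w i j
  w_le_one : ∀ i j, w i j ≤ 1
  sum_w_le_one : ∀ i, (nbr i).Nonempty → ∑ j ∈ nbr i, w j i ≤ 1
  prod_nonempty : ∀ i, (prod i).Nonempty
  θ_pos : ∀ i t, 0 < θ i t
  θ_le_one : ∀ i t, θ i t ≤ 1

variable {V P : Type} [Fintype V] [DecidableEq V] [DecidableEq P]

/-- A source node: a node with no incoming edges. -/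
def SN.isSource (S : SN V P) (i : V) : Prop := S.nbr i = ∅

/-- The payoff of player `i` in the joint strategy `s` (`none` is the null strategy `t₀`,
`c0 > 0` is the constant payoff of source nodes adopting a product). -/
def SN.payoff (S : SN V P) (c0 : ℝ) (s : V → Option P) (i : V) : ℝ :=
  match s i with
  | none => 0
  | some t =>
      if S.nbr i = ∅ then c0
      else (∑ j ∈ (S.nbr i).filter (fun j => s j = some t), S.w j i) - S.θ i t

/-- A joint strategy is valid if every player only uses products from his product set. -/
def SN.valid (S : SN V P) (s : V → Option P) : Prop :=
  ∀ i t, s i = some t → t ∈ S.prod i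

/-- The strategy `a` belongs to the strategy set `P(i) ∪ {t₀}` of player `i`. -/
def SN.allowed (S : SN V P) (i : V) (a : Option P) : Prop :=
  ∀ t, a = some t → t ∈ S.prod i

/-- (Pure) Nash equilibrium of the social network game. -/
def SN.NE (S : SN V P) (c0 : ℝ) (s : V → Option P) : Prop :=
  S.valid s ∧ ∀ i a, S.allowed i a →
    S.payoff c0 (Function.update s i a) i ≤ S.payoff c0 s i

/-- `C` is a self-sustaining strongly connected subgraph (SCS) for product `t`:
it is nonempty, strongly connected (as an induced subgraph), every node in it
has `t` available, and every node in it receives accumulated weight at least its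
threshold from its neighbours inside `C`. -/
def SN.SelfSust (S : SN V P) (t : P) (C : Finset V) : Prop :=
  C.Nonempty ∧
  (∀ i ∈ C, ∀ j ∈ C,
      Relation.ReflTransGen (fun a b => a ∈ C ∧ b ∈ C ∧ a ∈ S.nbr b) i j) ∧
  ∀ i ∈ C, t ∈ S.prod i ∧ S.θ i t ≤ ∑ j ∈ S.nbr i ∩ C, S.w j i

open scoped Classical in
/-- `R`: the least set of nodes containing `C` and closed under adding any node
`j` with `t ∈ P(j)` whose accumulated incoming weight from the set is at least
`θ(j,t)`. -/
noncomputable def SN.spread (S : SN V P) (t : P) (C : Finset V) : Set V :=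
  ⋂₀ {A : Set V | ↑C ⊆ A ∧
      ∀ j, t ∈ S.prod j →
        S.θ j t ≤ ∑ k ∈ (S.nbr j).filter (fun k => k ∈ A), S.w k j → j ∈ A}

/-! Without source nodes a player adopting `t` earns its inflow from `t`-adopters minus `θ(i,t)`.
In the profile "`t` on `R`", a node of `R` meets its threshold from `R`: by minimality, since the
nodes of `R` that do so form a closed set containing the self-sustaining `C`. A node outside `R`
that could adopt `t` stays strictly below its threshold because `R` is closed. Switching to any
other product earns `-θ < 0`, as no neighbour plays it. -/

namespace SN

open scoped Classical

variable (S : SN V P)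

noncomputable def inflow (A : Set V) (j : V) : ℝ :=
  ∑ k ∈ (S.nbr j).filter (· ∈ A), S.w k j

noncomputable def adoptOn {α β : Type*} (A : Set α) (b : β) : α → Option β :=
  fun a => if a ∈ A then some b else none

section Inflow

variable {S}

lemma inflow_mono {A B : Set V} (hAB : A ⊆ B) (j : V) : S.inflow A j ≤ S.inflow B j :=
  sum_le_sum_of_subset_of_nonneg (monotone_filter_right _ fun _ _ => @hAB _)
    fun k _ _ => S.w_nonneg k j

lemma inflow_coe_finset (C : Finset V) (j : V) :
    S.inflow C j = ∑ k ∈ S.nbr j ∩ C, S.w k j := by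
  simp only [inflow, mem_coe, filter_mem_eq_inter]

end Inflow

section Spread

variable {S} {t : P} {C : Finset V}

lemma spread_subset_of_closed {A : Set V} (hCA : ↑C ⊆ A)
    (hA : ∀ j, t ∈ S.prod j → S.θ j t ≤ S.inflow A j → j ∈ A) : S.spread t C ⊆ A :=
  Set.sInter_subset_of_mem ⟨hCA, hA⟩

lemma subset_spread : ↑C ⊆ S.spread t C :=
  fun _ hx _ hA => hA.1 hx

lemma mem_spread_of_le_inflow {j : V} (hj : t ∈ S.prod j)
    (hle : S.θ j t ≤ S.inflow (S.spread t C) j) : j ∈ S.spread t C :=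
  fun _ hA => hA.2 j hj <| hle.trans <| inflow_mono (Set.sInter_subset_of_mem hA) j

lemma inflow_spread_lt_of_notMem {j : V} (hj : j ∉ S.spread t C) (ht : t ∈ S.prod j) :
    S.inflow (S.spread t C) j < S.θ j t :=
  lt_of_not_ge fun hle => hj (mem_spread_of_le_inflow ht hle)

lemma mem_prod_of_mem_spread (hC : ∀ i ∈ C, t ∈ S.prod i) {i : V} (hi : i ∈ S.spread t C) :
    t ∈ S.prod i :=
  spread_subset_of_closed (A := {i | t ∈ S.prod i}) hC (fun _ hj _ => hj) hi

/-- Minimality of the spread, applied to the subset of its nodes that meet their threshold. -/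
lemma le_inflow_spread_of_mem (hC : ∀ i ∈ C, S.θ i t ≤ S.inflow C i) {i : V}
    (hi : i ∈ S.spread t C) : S.θ i t ≤ S.inflow (S.spread t C) i := by
  refine (spread_subset_of_closed
    (A := {j ∈ S.spread t C | S.θ j t ≤ S.inflow (S.spread t C) j}) ?_ ?_ hi).2
  · exact fun x hx => ⟨subset_spread hx, (hC x hx).trans (inflow_mono subset_spread x)⟩
  · intro j hj hle
    have hle' := hle.trans (inflow_mono (fun _ hk => hk.1) j)
    exact ⟨mem_spread_of_le_inflow hj hle', hle'⟩

end Spread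

section Payoff

variable {S} (c0 : ℝ)

lemma payoff_update_none (s : V → Option P) (i : V) :
    S.payoff c0 (Function.update s i none) i = 0 := by
  simp [payoff]

/-- As `i ∉ N(i)`, changing `i`'s own strategy does not change whom `i` sees adopting `t`. -/
lemma payoff_update_some (s : V → Option P) {i : V} (hi : ¬ S.isSource i) (t : P) :
    S.payoff c0 (Function.update s i (some t)) i =
      ∑ j ∈ (S.nbr i).filter (fun j => s j = some t), S.w j i - S.θ i t := by
  have hfilter : (S.nbr i).filter (fun j => Function.update s i (some t) j = some t) =
      (S.nbr i).filter (fun j => s j = some t) :=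
    filter_congr fun j hj => by
      rw [Function.update_of_ne (ne_of_mem_of_not_mem hj (S.no_self i))]
  simp only [payoff, Function.update_self, if_neg (show S.nbr i ≠ ∅ from hi), hfilter]

lemma adoptOn_eq_some_iff {α β : Type*} {A : Set α} {b b' : β} {a : α} :
    adoptOn A b a = some b' ↔ a ∈ A ∧ b = b' := by
  unfold adoptOn
  split_ifs <;> simp [*]

lemma payoff_update_adoptOn {A : Set V} {t : P} {i : V} (hi : ¬ S.isSource i) (t' : P) :
    S.payoff c0 (Function.update (adoptOn A t) i (some t')) i =
      (if t' = t then S.inflow A i else 0) - S.θ i t' := by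
  simp only [payoff_update_some c0 _ hi, adoptOn_eq_some_iff]
  split_ifs with ht
  · simp [inflow, ht]
  · simp [Ne.symm ht]

end Payoff

theorem NE_adoptOn (c0 : ℝ) (hns : ∀ i, ¬ S.isSource i) {A : Set V} {t : P}
    (hprod : ∀ i ∈ A, t ∈ S.prod i) (hin : ∀ i ∈ A, S.θ i t ≤ S.inflow A i)
    (hout : ∀ i ∉ A, t ∈ S.prod i → S.inflow A i < S.θ i t) :
    S.NE c0 (adoptOn A t) := by
  refine ⟨fun i t' hi => ?_, fun i a ha => ?_⟩
  · by_cases hiA : i ∈ A <;> simp_all [adoptOn]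
  calc S.payoff c0 (Function.update (adoptOn A t) i a) i
      ≤ S.payoff c0 (Function.update (adoptOn A t) i (adoptOn A t i)) i := ?_
    _ = S.payoff c0 (adoptOn A t) i := by rw [Function.update_eq_self]
  have hθ := S.θ_pos i
  by_cases hiA : i ∈ A
  · rw [show adoptOn A t i = some t from if_pos hiA, payoff_update_adoptOn c0 (hns i), if_pos rfl]
    have := hin i hiA
    rcases a with _ | t'
    · rw [payoff_update_none]
      linarith
    · rw [payoff_update_adoptOn c0 (hns i)]
      split_ifs with ht
      · rw [ht]
      · linarith [hθ t']
  · rw [show adoptOn A t i = none from if_neg hiA, payoff_update_none]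
    rcases a with _ | t'
    · rw [payoff_update_none]
    · rw [payoff_update_adoptOn c0 (hns i)]
      split_ifs with ht
      · subst ht
        linarith [hout i hiA (ha _ rfl)]
      · linarith [hθ t']

end SN

open scoped Classical in
theorem spread_NE_general (S : SN V P) (c0 : ℝ)
    (hns : ∀ i, ¬ S.isSource i) (t : P) (C : Finset V) (hC : S.SelfSust t C) :
    S.NE c0 (fun i => if i ∈ S.spread t C then some t else none) ∧
      ∃ i, (if i ∈ S.spread t C then some t else (none : Option P)) ≠ none := by
  obtain ⟨hne, -, hC⟩ := hC
  have hprod (i) (hi : i ∈ S.spread t C) : t ∈ S.prod i :=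
    SN.mem_prod_of_mem_spread (fun i hi => (hC i hi).1) hi
  have hin (i) (hi : i ∈ S.spread t C) : S.θ i t ≤ S.inflow (S.spread t C) i :=
    SN.le_inflow_spread_of_mem
      (fun i hi => (SN.inflow_coe_finset (S := S) C i).symm ▸ (hC i hi).2) hi
  obtain ⟨i, hi⟩ := hne
  exact ⟨S.NE_adoptOn c0 hns hprod hin (fun _ => SN.inflow_spread_lt_of_notMem), i,
    by simp [SN.subset_spread hi]⟩

open scoped Classical in
/-- given a network with no source nodes and a self-sustaining SCS
`C` for product `t`, the joint strategy assigning `t` to all nodes of `R` (the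
least set containing `C` closed under threshold-exceeding adoption) and `t₀` to
all other nodes is a non-trivial Nash equilibrium. -/
theorem spread_NE (S : SN V P) (c0 : ℝ) (hc0 : 0 < c0)
    (hns : ∀ i, ¬ S.isSource i) (t : P) (C : Finset V) (hC : S.SelfSust t C) :
    S.NE c0 (fun i => if i ∈ S.spread t C then some t else none) ∧
      ∃ i, (if i ∈ S.spread t C then some t else (none : Option P)) ≠ none :=
  spread_NE_general S c0 hns t C hC
end

section
/- Let S be a social network whose underlying graph is a simple directed cycle. Then the associated social network game has the uniform finite improvement property: there is a scheduler f such that every improvement path conforming to f is finite. -/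
open Finset

variable {V P : Type} [Fintype V] [DecidableEq V] [DecidableEq P]

/-- Player `i` can strictly improve his payoff in `s` (i.e. `s i` is not a best
response to `s₋ᵢ`). -/
def SN.improvable (S : SN V P) (c0 : ℝ) (s : V → Option P) (i : V) : Prop :=
  ∃ a, S.allowed i a ∧ S.payoff c0 s i < S.payoff c0 (Function.update s i a) i

/-- A scheduler: at every joint strategy that is not a Nash equilibrium it
selects a player who is not playing a best response. -/
def SN.Scheduler (S : SN V P) (c0 : ℝ) (f : (V → Option P) → V) : Prop :=
  ∀ s, (∃ i, S.improvable c0 s i) → S.improvable c0 s (f s)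

/-- The uniform FIP: there is a scheduler such that every improvement path that
conforms to it is finite, i.e. there is no infinite conforming improvement
sequence. -/
def SN.UniformFIP (S : SN V P) (c0 : ℝ) : Prop :=
  ∃ f, S.Scheduler c0 f ∧
    ¬ ∃ ρ : ℕ → (V → Option P), S.valid (ρ 0) ∧
        ∀ k, ∃ a, S.allowed (f (ρ k)) a ∧
          ρ (k + 1) = Function.update (ρ k) (f (ρ k)) a ∧
          S.payoff c0 (ρ k) (f (ρ k)) < S.payoff c0 (ρ (k + 1)) (f (ρ k))

/-!
Schedule the smallest-index player who is not at a best response. A player at a best response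
who adopted a product shares it with his predecessor (abstaining would pay `0 > -θ`), so when the
last player `n + 1` is scheduled, every product adopted anywhere is also his own. Hence he can
never improve by matching his predecessor, and each of his moves strictly increases the
neighbour-free part `0` or `-θ(n + 1, t)` of his payoff. This potential takes finitely many
values, so he eventually stops. Once the predecessor of a player stops, that player's payoff
increases strictly at each of his moves and is constant otherwise, so he stops as well; going
round the cycle `0, 1, …, n`, every player eventually stops, which no infinite path can do.
-/

open Filter

theorem eventually_not_lt_succ_of_finite_range {β : Type*} [Preorder β] {q : ℕ → β}
    (hfin : (Set.range q).Finite) (hmono : ∀ᶠ k in atTop, q k ≤ q (k + 1)) :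
    ∀ᶠ k in atTop, ¬ q k < q (k + 1) := by
  obtain ⟨K, hK⟩ := eventually_atTop.1 hmono
  have hmonoOn : ∀ ⦃k l⦄, K ≤ k → k ≤ l → q k ≤ q l := by
    intro k l hk hkl
    induction l, hkl using Nat.le_induction with
    | base => exact le_rfl
    | succ l hkl ih => exact ih.trans (hK l (hk.trans hkl))
  set M := {k | K ≤ k ∧ q k < q (k + 1)}
  have hinj : Set.InjOn q M := by
    intro k hk l hl hkl
    by_contra hne
    rcases Nat.lt_or_gt_of_ne hne with h | h
    · exact (hk.2.trans_le (hmonoOn (hk.1.trans k.le_succ) h)).ne hkl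
    · exact (hl.2.trans_le (hmonoOn (hl.1.trans l.le_succ) h)).ne hkl.symm
  have hM : M.Finite := Set.Finite.of_finite_image (hfin.subset (Set.image_subset_range q M)) hinj
  filter_upwards [Nat.cofinite_eq_atTop ▸ hM.eventually_cofinite_notMem, eventually_ge_atTop K]
    with k hkM hk hlt
  exact hkM ⟨hk, hlt⟩

theorem Fin.zero_sub_one_eq_last (n : ℕ) : (0 : Fin (n + 1)) - 1 = Fin.last n := by
  ext; simp

theorem Fin.succ_sub_one_eq_castSucc {n : ℕ} (i : Fin (n + 1)) : i.succ - 1 = i.castSucc := by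
  ext; simp [Fin.coe_sub_one]

namespace SN

section Game

variable (S : SN V P) (c0 : ℝ)

theorem payoff_congr {s s' : V → Option P} {i : V} (h : ∀ j ∈ insert i (S.nbr i), s j = s' j) :
    S.payoff c0 s i = S.payoff c0 s' i := by
  have hfilter : ∀ t, (S.nbr i).filter (fun j => s j = some t) =
      (S.nbr i).filter (fun j => s' j = some t) :=
    fun t => filter_congr fun j hj => by rw [h j (mem_insert_of_mem hj)]
  simp only [payoff, h i (mem_insert_self i _), hfilter]

theorem payoff_none {s : V → Option P} {i : V} (h : s i = none) : S.payoff c0 s i = 0 := by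
  simp [payoff, h]

theorem payoff_of_nbr_eq_singleton {s : V → Option P} {i j : V} {t : P} (hi : S.nbr i = {j})
    (h : s i = some t) :
    S.payoff c0 s i = (if s j = some t then S.w j i else 0) - S.θ i t := by
  simp only [payoff, h, hi, singleton_ne_empty, if_false, filter_singleton]
  split_ifs <;> simp

theorem eq_some_of_not_improvable {s : V → Option P} {i j : V} {t : P} (hi : S.nbr i = {j})
    (h : s i = some t) (hbest : ¬ S.improvable c0 s i) : s j = some t := by
  by_contra hj
  refine hbest ⟨none, fun _ h => by simp at h, ?_⟩
  rw [S.payoff_of_nbr_eq_singleton c0 hi h, if_neg hj,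
    S.payoff_none c0 (Function.update_self i none s)]
  linarith [S.θ_pos i t]

def isolatedPayoff (i : V) : Option P → ℝ
  | none => 0
  | some t => -S.θ i t

theorem isolatedPayoff_le_payoff {s : V → Option P} {i j : V} (hi : S.nbr i = {j}) :
    S.isolatedPayoff i (s i) ≤ S.payoff c0 s i := by
  cases h : s i with
  | none => simp [isolatedPayoff, S.payoff_none c0 h]
  | some t =>
    rw [S.payoff_of_nbr_eq_singleton c0 hi h, isolatedPayoff]
    have := S.w_nonneg j i
    split_ifs <;> linarith

theorem finite_setOf_valid : {s | S.valid s}.Finite := by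
  refine (Set.Finite.pi' fun i => ((S.prod i).finite_toSet.image some).insert none).subset ?_
  intro s hs i
  cases h : s i with
  | none => exact Set.mem_insert _ _
  | some t => exact Set.mem_insert_of_mem _ ⟨t, hs i t h, rfl⟩

open Classical in
noncomputable def minScheduler [LinearOrder V] [Nonempty V] (s : V → Option P) : V :=
  if h : ∃ i, S.improvable c0 s i then wellFounded_lt.min {i | S.improvable c0 s i} h else Classical.arbitrary V

theorem minScheduler_le [LinearOrder V] [Nonempty V] {s : V → Option P} {i : V}
    (hi : S.improvable c0 s i) : S.minScheduler c0 s ≤ i := by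
  rw [minScheduler, dif_pos ⟨i, hi⟩]
  exact wellFounded_lt.min_le (s := {j | S.improvable c0 s j}) hi

theorem scheduler_minScheduler [LinearOrder V] [Nonempty V] : S.Scheduler c0 (S.minScheduler c0) :=
  fun s hs => by
    rw [minScheduler, dif_pos hs]
    exact wellFounded_lt.min_mem _ hs

def IsConformingPath (f : (V → Option P) → V) (ρ : ℕ → V → Option P) : Prop :=
  ∀ k, ∃ a, S.allowed (f (ρ k)) a ∧ ρ (k + 1) = Function.update (ρ k) (f (ρ k)) a ∧
    S.payoff c0 (ρ k) (f (ρ k)) < S.payoff c0 (ρ (k + 1)) (f (ρ k))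

end Game

section Path

variable {S : SN V P} {c0 : ℝ} {f : (V → Option P) → V} {ρ : ℕ → V → Option P}

theorem eventually_ne_of_potential (hvalid : ∀ k, S.valid (ρ k)) {i : V}
    (Φ : (V → Option P) → ℝ) (hmono : ∀ᶠ k in atTop, Φ (ρ k) ≤ Φ (ρ (k + 1)))
    (hmove : ∀ᶠ k in atTop, f (ρ k) = i → Φ (ρ k) < Φ (ρ (k + 1))) :
    ∀ᶠ k in atTop, f (ρ k) ≠ i := by
  have hfin : (Set.range fun k => Φ (ρ k)).Finite :=
    (S.finite_setOf_valid.image Φ).subset (Set.range_subset_iff.2 fun k => ⟨ρ k, hvalid k, rfl⟩)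
  filter_upwards [eventually_not_lt_succ_of_finite_range hfin hmono, hmove] with k hstop hlt hk
  exact hstop (hlt hk)

namespace IsConformingPath

variable (hρ : S.IsConformingPath c0 f ρ)
include hρ

theorem apply_of_ne {k : ℕ} {i : V} (hi : i ≠ f (ρ k)) : ρ (k + 1) i = ρ k i := by
  obtain ⟨a, -, hupd, -⟩ := hρ k
  rw [hupd, Function.update_of_ne hi]

theorem payoff_lt (k : ℕ) : S.payoff c0 (ρ k) (f (ρ k)) < S.payoff c0 (ρ (k + 1)) (f (ρ k)) := by
  obtain ⟨a, -, -, hlt⟩ := hρ k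
  exact hlt

theorem valid (h0 : S.valid (ρ 0)) (k : ℕ) : S.valid (ρ k) := by
  induction k with
  | zero => exact h0
  | succ k ih =>
    obtain ⟨a, ha, hupd, -⟩ := hρ k
    intro i t hit
    rw [hupd] at hit
    by_cases hi : i = f (ρ k)
    · subst hi
      exact ha t (by rwa [Function.update_self] at hit)
    · exact ih i t (by rwa [Function.update_of_ne hi] at hit)

theorem eventually_ne_of_forall_mem_nbr (hvalid : ∀ k, S.valid (ρ k)) {i : V}
    (hnbr : ∀ j ∈ S.nbr i, ∀ᶠ k in atTop, f (ρ k) ≠ j) : ∀ᶠ k in atTop, f (ρ k) ≠ i := by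
  have hstay : ∀ᶠ k in atTop, f (ρ k) ≠ i →
      S.payoff c0 (ρ k) i = S.payoff c0 (ρ (k + 1)) i := by
    filter_upwards [(eventually_all_finset _).2 hnbr] with k hk hki
    refine S.payoff_congr c0 fun j hj => (hρ.apply_of_ne ?_).symm
    rcases mem_insert.1 hj with rfl | hj
    · exact hki.symm
    · exact (hk j hj).symm
  refine eventually_ne_of_potential hvalid (fun s => S.payoff c0 s i) ?_
    (Eventually.of_forall fun k => by rintro rfl; exact hρ.payoff_lt k)
  filter_upwards [hstay] with k hk
  by_cases hki : f (ρ k) = i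
  · subst hki
    exact (hρ.payoff_lt k).le
  · exact (hk hki).le

end IsConformingPath

end Path

section Cycle

variable {n : ℕ} {S : SN (Fin (n + 2)) P} {c0 : ℝ} (hcyc : ∀ i, S.nbr i = {i - 1})
include hcyc

theorem apply_last_eq_some_of_lt_last_not_improvable {s : Fin (n + 2) → Option P}
    (hbest : ∀ j < Fin.last (n + 1), ¬ S.improvable c0 s j) {j : Fin (n + 2)} {t : P}
    (hj : s j = some t) : s (Fin.last (n + 1)) = some t := by
  induction j using Fin.induction with
  | zero =>
    have hpred := S.eq_some_of_not_improvable c0 (hcyc 0) hj (hbest 0 Fin.last_pos)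
    rwa [Fin.zero_sub_one_eq_last] at hpred
  | succ j ih =>
    rcases (Fin.le_last j.succ).lt_or_eq with hlt | heq
    · have hpred := S.eq_some_of_not_improvable c0 (hcyc _) hj (hbest _ hlt)
      rw [Fin.succ_sub_one_eq_castSucc] at hpred
      exact ih hpred
    · exact heq ▸ hj

theorem payoff_update_last_eq_isolatedPayoff {s : Fin (n + 2) → Option P} {a : Option P}
    (hbest : ∀ j < Fin.last (n + 1), ¬ S.improvable c0 s j)
    (hlt : S.payoff c0 s (Fin.last (n + 1)) <
      S.payoff c0 (Function.update s (Fin.last (n + 1)) a) (Fin.last (n + 1))) :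
    S.payoff c0 (Function.update s (Fin.last (n + 1)) a) (Fin.last (n + 1)) =
      S.isolatedPayoff (Fin.last (n + 1)) a := by
  cases a with
  | none => exact S.payoff_none c0 (Function.update_self _ _ _)
  | some t =>
    rw [S.payoff_of_nbr_eq_singleton c0 (hcyc _) (Function.update_self _ _ _),
      Function.update_of_ne (by simp), isolatedPayoff]
    split_ifs with hpred
    · have hlast := apply_last_eq_some_of_lt_last_not_improvable hcyc hbest hpred
      rw [← hlast, Function.update_eq_self] at hlt
      exact absurd hlt (lt_irrefl _)
    · simp

theorem IsConformingPath.eventually_minScheduler_ne_last {ρ : ℕ → Fin (n + 2) → Option P}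
    (hρ : S.IsConformingPath c0 (S.minScheduler c0) ρ) (hvalid : ∀ k, S.valid (ρ k)) :
    ∀ᶠ k in atTop, S.minScheduler c0 (ρ k) ≠ Fin.last (n + 1) := by
  set last := Fin.last (n + 1)
  have hmove : ∀ k, S.minScheduler c0 (ρ k) = last →
      S.isolatedPayoff last (ρ k last) < S.isolatedPayoff last (ρ (k + 1) last) := by
    intro k hk
    obtain ⟨a, -, hupd, hlt⟩ := hρ k
    rw [hk] at hupd hlt
    have hbest : ∀ j < last, ¬ S.improvable c0 (ρ k) j := fun j hj himp =>
      (hk ▸ S.minScheduler_le c0 himp).not_gt hj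
    rw [hupd] at hlt ⊢
    calc S.isolatedPayoff last (ρ k last) ≤ S.payoff c0 (ρ k) last :=
          S.isolatedPayoff_le_payoff c0 (hcyc last)
      _ < S.payoff c0 (Function.update (ρ k) last a) last := hlt
      _ = S.isolatedPayoff last (Function.update (ρ k) last a last) := by
          rw [Function.update_self]
          exact payoff_update_last_eq_isolatedPayoff hcyc hbest hlt
  refine eventually_ne_of_potential hvalid (fun s => S.isolatedPayoff last (s last))
    (Eventually.of_forall fun k => ?_) (Eventually.of_forall hmove)
  by_cases hk : S.minScheduler c0 (ρ k) = last
  · exact (hmove k hk).le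
  · rw [hρ.apply_of_ne (Ne.symm hk)]

end Cycle

end SN

theorem uniformFIP_of_cycle_general {n : ℕ} (S : SN (Fin (n + 2)) P) (c0 : ℝ)
    (hcyc : ∀ i, S.nbr i = {i - 1}) :
    S.UniformFIP c0 := by
  refine ⟨S.minScheduler c0, S.scheduler_minScheduler c0, ?_⟩
  rintro ⟨ρ, h0, hρ⟩
  replace hρ : S.IsConformingPath c0 (S.minScheduler c0) ρ := hρ
  have hvalid := hρ.valid h0
  have hstop : ∀ i, ∀ᶠ k in atTop, S.minScheduler c0 (ρ k) ≠ i := by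
    intro i
    induction i using Fin.induction with
    | zero =>
      refine hρ.eventually_ne_of_forall_mem_nbr hvalid ?_
      simpa only [hcyc, Fin.zero_sub_one_eq_last, mem_singleton, forall_eq] using
        hρ.eventually_minScheduler_ne_last hcyc hvalid
    | succ i ih =>
      refine hρ.eventually_ne_of_forall_mem_nbr hvalid ?_
      simpa only [hcyc, Fin.succ_sub_one_eq_castSucc, mem_singleton, forall_eq] using ih
  obtain ⟨k, hk⟩ := (eventually_all.2 hstop).exists
  exact hk _ rfl

/-- if the underlying graph of a social network is a simple
directed cycle `0 → 1 → ⋯ → (n+1) → 0` (each node's unique in-neighbour is its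
predecessor), then the associated game has the uniform FIP. -/
theorem uniformFIP_of_cycle {n : ℕ} (S : SN (Fin (n + 2)) P) (c0 : ℝ) (hc0 : 0 < c0)
    (hcyc : ∀ i, S.nbr i = {i - 1}) :
    S.UniformFIP c0 :=
  uniformFIP_of_cycle_general S c0 hcyc
end

section
/- The price of anarchy of social network games whose underlying graph is a simple cycle is unbounded: for every M > 0 there is such a game having a social optimum with positive social welfare and a Nash equilibrium (the all-t_0 strategy) with social welfare 0, so the ratio exceeds M (is infinite). -/
open Finset

variable {V P : Type} [Fintype V] [DecidableEq V] [DecidableEq P]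

/-- Social welfare: the sum of the payoffs of all players. -/
def SN.SW (S : SN V P) (c0 : ℝ) (s : V → Option P) : ℝ :=
  ∑ i, S.payoff c0 s i

namespace SN

variable (S : SN V P) (c0 : ℝ)

theorem SW_none : S.SW c0 (fun _ => none) = 0 := by
  simp [SN.SW, SN.payoff]

/-- Without source nodes nobody gains by adopting a product alone: the payoff is `-θ < 0`. -/
theorem NE_none (hS : ∀ i, ¬ S.isSource i) : S.NE c0 (fun _ => none) := by
  refine ⟨fun _ _ h => (nomatch h), fun i a _ => ?_⟩
  cases a with
  | none => simp [SN.payoff]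
  | some t =>
    have hlonely : (S.nbr i).filter (fun j => Function.update (fun _ => none) i (some t) j = some t) = ∅ :=
      Finset.filter_eq_empty_iff.mpr fun j hj => by
        rw [Function.update_of_ne (ne_of_mem_of_not_mem hj (S.no_self i))]
        simp
    simp only [SN.payoff, Function.update_self, if_neg (show S.nbr i ≠ ∅ from hS i), hlonely, Finset.sum_empty]
    linarith [S.θ_pos i t]

theorem payoff_const {i : V} (hi : ¬ S.isSource i) (t : P) :
    S.payoff c0 (fun _ => some t) i = ∑ j ∈ S.nbr i, S.w j i - S.θ i t := by
  simp only [SN.payoff, if_neg (show S.nbr i ≠ ∅ from hi), Finset.filter_true]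

theorem payoff_le_payoff_const {i : V} (hi : ¬ S.isSource i) {t : P}
    (hcheap : ∀ t', S.θ i t ≤ S.θ i t') (hgain : S.θ i t ≤ ∑ j ∈ S.nbr i, S.w j i)
    (s : V → Option P) : S.payoff c0 s i ≤ S.payoff c0 (fun _ => some t) i := by
  rw [payoff_const S c0 hi]
  cases hsi : s i with
  | none => simpa [SN.payoff, hsi] using hgain
  | some t' =>
    have hpart : ∑ j ∈ (S.nbr i).filter (fun j => s j = some t'), S.w j i ≤ ∑ j ∈ S.nbr i, S.w j i :=
      Finset.sum_le_sum_of_subset_of_nonneg (Finset.filter_subset _ _)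
        fun j _ _ => S.w_nonneg j i
    simp only [SN.payoff, hsi, if_neg (show S.nbr i ≠ ∅ from hi)]
    linarith [hcheap t']

theorem SW_le_SW_const (hS : ∀ i, ¬ S.isSource i) {t : P}
    (hcheap : ∀ i t', S.θ i t ≤ S.θ i t') (hgain : ∀ i, S.θ i t ≤ ∑ j ∈ S.nbr i, S.w j i)
    (s : V → Option P) : S.SW c0 s ≤ S.SW c0 (fun _ => some t) :=
  Finset.sum_le_sum fun i _ => S.payoff_le_payoff_const c0 (hS i) (hcheap i) (hgain i) s

end SN

noncomputable def cycleSN (n : ℕ) : SN (Fin (n + 2)) (Fin 1) where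
  nbr i := {i - 1}
  w _ _ := 1
  prod _ := Finset.univ
  θ _ _ := 1 / 2
  no_self i := by rw [Finset.mem_singleton, eq_comm, sub_eq_self]; exact one_ne_zero
  w_nonneg _ _ := zero_le_one
  w_le_one _ _ := le_rfl
  sum_w_le_one _ _ := by rw [Finset.sum_singleton]
  prod_nonempty _ := Finset.univ_nonempty
  θ_pos _ _ := by norm_num
  θ_le_one _ _ := by norm_num

theorem cycleSN_not_isSource (n : ℕ) (i : Fin (n + 2)) : ¬ (cycleSN n).isSource i :=
  Finset.singleton_ne_empty _

theorem cycleSN_SW_const (n : ℕ) (c0 : ℝ) : (cycleSN n).SW c0 (fun _ => some 0) = (n + 2) / 2 := by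
  simp only [SN.SW, SN.payoff_const _ c0 (cycleSN_not_isSource n _)]
  simp only [cycleSN, sum_const, card_singleton, card_univ, Fintype.card_fin, nsmul_eq_mul]
  push_cast
  ring

/-- the price of anarchy of social network games on simple cycles
is unbounded: for every `M > 0` there is such a game with a social optimum of
positive social welfare while the all-`t₀` profile is a Nash equilibrium of
social welfare `0`, so the ratio exceeds `M` (it is infinite). -/
theorem poa_unbounded_on_cycles :
    ∀ M : ℝ, 0 < M →
      ∃ (n : ℕ) (S : SN (Fin (n + 2)) (Fin 1)) (c0 : ℝ), 0 < c0 ∧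
        (∀ i, S.nbr i = {i - 1}) ∧
        S.NE c0 (fun _ => none) ∧ S.SW c0 (fun _ => none) = 0 ∧
        ∃ s, S.valid s ∧ (∀ s', S.valid s' → S.SW c0 s' ≤ S.SW c0 s) ∧
          0 < S.SW c0 s ∧ M * S.SW c0 (fun _ => none) < S.SW c0 s := by
  intro M _
  have hopt_pos : 0 < (cycleSN 0).SW 1 (fun _ => some 0) := by
    rw [cycleSN_SW_const]; norm_num
  refine ⟨0, cycleSN 0, 1, one_pos, fun _ => rfl,
    (cycleSN 0).NE_none 1 (cycleSN_not_isSource 0), (cycleSN 0).SW_none 1,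
    fun _ => some 0, fun _ _ _ => Finset.mem_univ _, fun s' _ => ?_, hopt_pos, ?_⟩
  · refine (cycleSN 0).SW_le_SW_const 1 (cycleSN_not_isSource 0) (fun _ _ => le_rfl) (fun _ => ?_) s'
    norm_num [cycleSN]
  · rwa [SN.SW_none, mul_zero]
end
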